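/- arXiv:2010.06551 — 2 statements merged into one kernel-verified Lean document; each statement's English description precedes it below -/
import Mathlib

section
/- Let X be a nonempty compact metric space in which every pair of points is joined by a geodesic, i.e. for all x, y ∈ X there exists γ : [0, dist(x,y)] → X with γ(0) = x, γ(dist(x,y)) = y and dist(γ(s), γ(t)) = |s − t| for all s, t. Let Y be a metric space and f : X → Y a Lipschitz map, with L = L_f(X) its (least) global Lipschitz constant. Then the maximum stretch set λ_f = { x ∈ X : L_f(x) = L } is nonempty and closed. -/
open Metric Set

/-- The Lipschitz constant of `f` on a set `K`, valued in `[0,∞]`. -/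
noncomputable def lipConstOn {X Y : Type*} [MetricSpace X] [MetricSpace Y]
    (f : X → Y) (K : Set X) : ENNReal :=
  sInf { L : ENNReal | ∀ x ∈ K, ∀ y ∈ K, edist (f x) (f y) ≤ L * edist x y }

/-- The local Lipschitz constant of `f` at `x`. -/
noncomputable def locLipConst {X Y : Type*} [MetricSpace X] [MetricSpace Y]
    (f : X → Y) (x : X) : ENNReal :=
  ⨅ (r : ℝ) (_ : 0 < r), lipConstOn f (ball x r)

/-!
Upper semicontinuity of `x ↦ L_f(x)` makes `λ_f` closed and lets `L_f(·)` attain its maximum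
`M` on the compact space `X`. If `M < L`, pick `M < c < L`: the open sets on which `f` has
Lipschitz constant `< c` cover `X`, so by the Lebesgue number lemma `f` is `c`-Lipschitz on all
pairs at distance `< δ`. Bisecting along geodesics propagates this to all pairs, so `L ≤ c`,
a contradiction.
-/

section LipschitzConstant

variable {X Y : Type*} [MetricSpace X] [MetricSpace Y] {f : X → Y} {K K' : Set X} {c : ENNReal}

lemma lipConstOn_mono (f : X → Y) (h : K ⊆ K') : lipConstOn f K ≤ lipConstOn f K' :=
  sInf_le_sInf fun _ hL x hx y hy => hL x (h hx) y (h hy)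

lemma lipConstOn_le (h : ∀ x ∈ K, ∀ y ∈ K, edist (f x) (f y) ≤ c * edist x y) :
    lipConstOn f K ≤ c :=
  sInf_le h

lemma edist_le_of_lipConstOn_lt (h : lipConstOn f K < c) {x y : X} (hx : x ∈ K) (hy : y ∈ K) :
    edist (f x) (f y) ≤ c * edist x y := by
  obtain ⟨L, hL, hLc⟩ := sInf_lt_iff.mp h
  exact (hL x hx y hy).trans (mul_le_mul_left hLc.le _)

lemma locLipConst_le_lipConstOn {U : Set X} (hU : IsOpen U) {x : X} (hx : x ∈ U) :
    locLipConst f x ≤ lipConstOn f U := by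
  obtain ⟨r, hr, hball⟩ := isOpen_iff.mp hU x hx
  exact iInf₂_le_of_le r hr (lipConstOn_mono f hball)

lemma locLipConst_le_lipConstOn_univ (f : X → Y) (x : X) :
    locLipConst f x ≤ lipConstOn f univ :=
  locLipConst_le_lipConstOn isOpen_univ (mem_univ x)

lemma exists_lipConstOn_ball_lt {x : X} (h : locLipConst f x < c) :
    ∃ r > 0, lipConstOn f (ball x r) < c := by
  simpa only [locLipConst, iInf_lt_iff, exists_prop] using h

lemma upperSemicontinuous_locLipConst (f : X → Y) : UpperSemicontinuous (locLipConst f) := by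
  intro x c hc
  obtain ⟨r, hr, hrc⟩ := exists_lipConstOn_ball_lt hc
  filter_upwards [ball_mem_nhds x hr] with y hy
  exact (locLipConst_le_lipConstOn isOpen_ball hy).trans_lt hrc

lemma exists_pos_edist_le_mul_of_forall_locLipConst_lt [CompactSpace X]
    (h : ∀ x, locLipConst f x < c) :
    ∃ δ > 0, ∀ a b : X, dist a b < δ → edist (f a) (f b) ≤ c * edist a b := by
  have hcover : univ ⊆ ⋃₀ {U : Set X | IsOpen U ∧ lipConstOn f U < c} := fun x _ => by
    obtain ⟨r, hr, hrc⟩ := exists_lipConstOn_ball_lt (h x)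
    exact ⟨ball x r, ⟨isOpen_ball, hrc⟩, mem_ball_self hr⟩
  obtain ⟨δ, hδ, hleb⟩ :=
    lebesgue_number_lemma_of_metric_sUnion isCompact_univ (fun _ hU => hU.1) hcover
  refine ⟨δ, hδ, fun a b hab => ?_⟩
  obtain ⟨U, ⟨-, hUc⟩, hU⟩ := hleb a (mem_univ a)
  exact edist_le_of_lipConstOn_lt hUc (hU (mem_ball_self hδ)) (hU (mem_ball'.mpr hab))

end LipschitzConstant

section Geodesic

variable {X Y : Type*} [MetricSpace X] [MetricSpace Y]

lemma exists_midpoint_of_geodesic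
    (hgeo : ∀ x y : X, ∃ γ : ℝ → X, γ 0 = x ∧ γ (dist x y) = y ∧
      ∀ s ∈ Icc (0 : ℝ) (dist x y), ∀ t ∈ Icc (0 : ℝ) (dist x y),
        dist (γ s) (γ t) = |s - t|)
    (x y : X) : ∃ m, dist x m = dist x y / 2 ∧ dist m y = dist x y / 2 := by
  obtain ⟨γ, hγ0, hγ1, hγ⟩ := hgeo x y
  have hd : 0 ≤ dist x y := dist_nonneg
  have h0 : (0 : ℝ) ∈ Icc 0 (dist x y) := ⟨le_rfl, hd⟩
  have h1 : dist x y ∈ Icc 0 (dist x y) := ⟨hd, le_rfl⟩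
  have hhalf : dist x y / 2 ∈ Icc 0 (dist x y) := ⟨by linarith, by linarith⟩
  refine ⟨γ (dist x y / 2), ?_, ?_⟩
  · have := hγ 0 h0 _ hhalf
    rw [hγ0] at this
    rw [this, zero_sub, abs_neg, abs_of_nonneg hhalf.1]
  · have := hγ _ hhalf _ h1
    rw [hγ1] at this
    rw [this, abs_of_nonpos (by linarith)]
    ring

lemma edist_le_mul_edist_of_exists_midpoint
    (hmid : ∀ x y : X, ∃ m, dist x m = dist x y / 2 ∧ dist m y = dist x y / 2)
    {f : X → Y} {c : ENNReal} {δ : ℝ} (hδ : 0 < δ)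
    (hloc : ∀ a b : X, dist a b < δ → edist (f a) (f b) ≤ c * edist a b) (x y : X) :
    edist (f x) (f y) ≤ c * edist x y := by
  have key : ∀ n : ℕ, ∀ a b : X, dist a b < 2 ^ n * δ →
      edist (f a) (f b) ≤ c * edist a b := by
    intro n
    induction n with
    | zero => simpa using hloc
    | succ n ih =>
      intro a b hab
      obtain ⟨m, ham, hmb⟩ := hmid a b
      have half : dist a b / 2 < 2 ^ n * δ := by rw [pow_succ] at hab; linarith
      calc edist (f a) (f b) ≤ edist (f a) (f m) + edist (f m) (f b) := edist_triangle _ _ _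
        _ ≤ c * edist a m + c * edist m b :=
          add_le_add (ih a m (ham ▸ half)) (ih m b (hmb ▸ half))
        _ = c * edist a b := by
          rw [← mul_add, edist_dist, edist_dist, edist_dist, ham, hmb,
            ← ENNReal.ofReal_add (by positivity) (by positivity), add_halves]
  obtain ⟨n, hn⟩ := pow_unbounded_of_one_lt (dist x y / δ) one_lt_two
  exact key n x y ((div_lt_iff₀ hδ).mp hn)

end Geodesic

theorem maxStretchSet_nonempty_isClosed_general {X Y : Type*} [MetricSpace X] [MetricSpace Y]
    [Nonempty X] [CompactSpace X]
    (hgeo : ∀ x y : X, ∃ γ : ℝ → X, γ 0 = x ∧ γ (dist x y) = y ∧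
      ∀ s ∈ Icc (0 : ℝ) (dist x y), ∀ t ∈ Icc (0 : ℝ) (dist x y),
        dist (γ s) (γ t) = |s - t|)
    (f : X → Y) :
    ({ x : X | locLipConst f x = lipConstOn f Set.univ }).Nonempty ∧
      IsClosed { x : X | locLipConst f x = lipConstOn f Set.univ } := by
  have hset : { x : X | locLipConst f x = lipConstOn f univ } =
      locLipConst f ⁻¹' Ici (lipConstOn f univ) :=
    ext fun x => (locLipConst_le_lipConstOn_univ f x).ge_iff_eq.symm
  have husc := upperSemicontinuous_locLipConst f
  obtain ⟨p, -, hp⟩ :=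
    (husc.upperSemicontinuousOn univ).exists_isMaxOn univ_nonempty isCompact_univ
  refine ⟨⟨p, le_antisymm (locLipConst_le_lipConstOn_univ f p) ?_⟩,
    hset ▸ husc.isClosed_preimage _⟩
  by_contra! hlt
  obtain ⟨c, hpc, hcL⟩ := exists_between hlt
  obtain ⟨δ, hδ, hloc⟩ :=
    exists_pos_edist_le_mul_of_forall_locLipConst_lt fun x => (hp (mem_univ x)).trans_lt hpc
  have hglobal : lipConstOn f univ ≤ c := lipConstOn_le fun x _ y _ =>
    edist_le_mul_edist_of_exists_midpoint (exists_midpoint_of_geodesic hgeo) hδ hloc x y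
  exact hglobal.not_gt hcL

/-- on a nonempty compact metric space in which every pair of points
is joined by a unit-speed geodesic, for any Lipschitz map `f` with global
Lipschitz constant `L = L_f(X)`, the maximum stretch set
`λ_f = {x | L_f(x) = L}` is nonempty and closed. -/
theorem maxStretchSet_nonempty_isClosed {X Y : Type*} [MetricSpace X] [MetricSpace Y]
    [Nonempty X] [CompactSpace X]
    (hgeo : ∀ x y : X, ∃ γ : ℝ → X, γ 0 = x ∧ γ (dist x y) = y ∧
      ∀ s ∈ Icc (0 : ℝ) (dist x y), ∀ t ∈ Icc (0 : ℝ) (dist x y),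
        dist (γ s) (γ t) = |s - t|)
    (f : X → Y) (hf : lipConstOn f Set.univ ≠ ⊤) :
    ({ x : X | locLipConst f x = lipConstOn f Set.univ }).Nonempty ∧
      IsClosed { x : X | locLipConst f x = lipConstOn f Set.univ } :=
  maxStretchSet_nonempty_isClosed_general hgeo f
end

section
/- Fix an integer n ≥ 2 and a real T > 0. For each real p > n define f_p : [0,T] → ℝ by f_p(t) = ∫_0^t (\sinh s)^{−(n−1)/(p−1)} ds. Then f_p converges uniformly on [0,T] to the identity function t ↦ t as p → +∞. -/
/-!
Since `s ≤ sinh s ≤ sinh T` for `0 ≤ s ≤ T`, the profile with exponent `ε = (n-1)/(p-1)` is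
squeezed between `t * (sinh T)^(-ε)` and `∫₀ᵗ s^(-ε) ds = t^(1-ε)/(1-ε)`. Both bounds are jointly
continuous in `(ε, t)` on a compact rectangle `[0, 1/2] × [0, T]` and equal `t` at `ε = 0`, so by
uniform continuity they converge to `t` uniformly as `ε → 0⁺`; hence so does the profile.
-/

open Filter Set Real MeasureTheory intervalIntegral Topology

lemma TendstoUniformlyOn.comp_tendsto {ι γ α β : Type*} [UniformSpace β] {F : ι → α → β}
    {f : α → β} {p : Filter ι} {s : Set α} (h : TendstoUniformlyOn F f p s) {g : γ → ι}
    {q : Filter γ} (hg : Tendsto g q p) : TendstoUniformlyOn (fun c => F (g c)) f q s :=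
  fun u hu => hg.eventually (h u hu)

lemma TendstoUniformlyOn.of_le_of_le {ι α : Type*} {p : Filter ι} {s : Set α}
    {F G H : ι → α → ℝ} {f : α → ℝ} (hG : TendstoUniformlyOn G f p s)
    (hH : TendstoUniformlyOn H f p s) (hGF : ∀ᶠ i in p, ∀ x ∈ s, G i x ≤ F i x)
    (hFH : ∀ᶠ i in p, ∀ x ∈ s, F i x ≤ H i x) : TendstoUniformlyOn F f p s := by
  rw [Metric.tendstoUniformlyOn_iff] at hG hH ⊢
  intro η hη
  filter_upwards [hG η hη, hH η hη, hGF, hFH] with i hGi hHi hGFi hFHi x hx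
  have hGx := hGi x hx
  have hHx := hHi x hx
  rw [Real.dist_eq, abs_sub_lt_iff] at hGx hHx ⊢
  constructor <;> linarith [hGFi x hx, hFHi x hx]

lemma ContinuousOn.tendstoUniformlyOn_nhdsGE {α β : Type*} [UniformSpace α] [UniformSpace β]
    {F : ℝ → α → β} {a b : ℝ} (hab : a < b) {V : Set α} (hV : IsCompact V)
    (hF : ContinuousOn ↿F (Icc a b ×ˢ V)) : TendstoUniformlyOn F (F a) (𝓝[≥] a) V := by
  rw [← nhdsWithin_Icc_eq_nhdsGE hab]
  exact ((isCompact_Icc.prod hV).uniformContinuousOn_of_continuous hF).tendstoUniformlyOn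
    (left_mem_Icc.2 hab.le)

section SinhPower

variable {ε s t T : ℝ}

lemma sinh_rpow_neg_le_rpow_neg (hε : 0 ≤ ε) (hs : 0 < s) : sinh s ^ (-ε) ≤ s ^ (-ε) :=
  rpow_le_rpow_of_nonpos hs (self_lt_sinh_iff.2 hs).le (neg_nonpos.2 hε)

lemma intervalIntegrable_sinh_rpow_neg (hε0 : 0 ≤ ε) (hε1 : ε < 1) (ht : 0 ≤ t) :
    IntervalIntegrable (fun s => sinh s ^ (-ε)) volume 0 t := by
  refine (intervalIntegrable_rpow' (r := -ε) (by linarith)).mono_fun'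
    (by fun_prop : Measurable fun s => sinh s ^ (-ε)).aestronglyMeasurable ?_
  filter_upwards [ae_restrict_mem measurableSet_uIoc] with s hs
  rw [uIoc_of_le ht] at hs
  rw [norm_of_nonneg (rpow_nonneg (sinh_nonneg_iff.2 hs.1.le) _)]
  exact sinh_rpow_neg_le_rpow_neg hε0 hs.1

lemma integral_sinh_rpow_neg_le (hε0 : 0 ≤ ε) (hε1 : ε < 1) (ht : 0 ≤ t) :
    ∫ s in 0..t, sinh s ^ (-ε) ≤ t ^ (1 - ε) / (1 - ε) := calc
  ∫ s in 0..t, sinh s ^ (-ε) ≤ ∫ s in 0..t, s ^ (-ε) :=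
    integral_mono_on_of_le_Ioo ht (intervalIntegrable_sinh_rpow_neg hε0 hε1 ht)
      (intervalIntegrable_rpow' (by linarith)) fun s hs => sinh_rpow_neg_le_rpow_neg hε0 hs.1
  _ = t ^ (1 - ε) / (1 - ε) := by
    rw [integral_rpow (.inl (by linarith)), zero_rpow (by linarith), neg_add_eq_sub, sub_zero]

lemma mul_sinh_rpow_neg_le_integral (hε0 : 0 ≤ ε) (hε1 : ε < 1) (ht : 0 ≤ t) (htT : t ≤ T) :
    t * sinh T ^ (-ε) ≤ ∫ s in 0..t, sinh s ^ (-ε) := calc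
  t * sinh T ^ (-ε) = ∫ _ in 0..t, sinh T ^ (-ε) := by simp
  _ ≤ ∫ s in 0..t, sinh s ^ (-ε) :=
    integral_mono_on_of_le_Ioo ht intervalIntegrable_const
      (intervalIntegrable_sinh_rpow_neg hε0 hε1 ht) fun s hs =>
        rpow_le_rpow_of_nonpos (sinh_pos_iff.2 hs.1) (sinh_le_sinh.2 (hs.2.le.trans htT))
          (neg_nonpos.2 hε0)

theorem tendstoUniformlyOn_integral_sinh_rpow_neg (hT : 0 < T) :
    TendstoUniformlyOn (fun ε t : ℝ => ∫ s in 0..t, sinh s ^ (-ε)) (fun t => t) (𝓝[≥] 0)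
      (Icc 0 T) := by
  have hlower : TendstoUniformlyOn (fun ε t : ℝ => t * sinh T ^ (-ε)) (fun t => t) (𝓝[≥] 0)
      (Icc 0 T) := by
    have hcont : ContinuousOn (fun q : ℝ × ℝ => q.2 * sinh T ^ (-q.1))
        (Icc 0 (1 / 2) ×ˢ Icc 0 T) := by
      fun_prop (disch := positivity)
    simpa using ContinuousOn.tendstoUniformlyOn_nhdsGE
      (F := fun ε t : ℝ => t * sinh T ^ (-ε)) one_half_pos isCompact_Icc hcont
  have hupper : TendstoUniformlyOn (fun ε t : ℝ => t ^ (1 - ε) / (1 - ε)) (fun t => t) (𝓝[≥] 0)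
      (Icc 0 T) := by
    have hcont : ContinuousOn (fun q : ℝ × ℝ => q.2 ^ (1 - q.1) / (1 - q.1))
        (Icc 0 (1 / 2) ×ˢ Icc 0 T) := by
      refine ContinuousOn.div ?_ (by fun_prop) fun q hq => ?_
      · exact continuousOn_snd.rpow (by fun_prop) fun q hq => .inr (by linarith [hq.1.2])
      · linarith [hq.1.2]
    simpa using ContinuousOn.tendstoUniformlyOn_nhdsGE
      (F := fun ε t : ℝ => t ^ (1 - ε) / (1 - ε)) one_half_pos isCompact_Icc hcont
  have hsmall : ∀ᶠ ε in 𝓝[≥] (0 : ℝ), ε ∈ Ico 0 1 := Ico_mem_nhdsGE one_pos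
  refine hlower.of_le_of_le hupper ?_ ?_ <;> filter_upwards [hsmall] with ε hε t ht
  · exact mul_sinh_rpow_neg_le_integral hε.1 hε.2 ht.1 ht.2
  · exact integral_sinh_rpow_neg_le hε.1 hε.2 ht.1

end SinhPower

/-- Lemma 5.5 of the paper: for an integer `n ≥ 2` and `T > 0`,
the hyperbolic cone profiles `f_p(t) = ∫_0^t (sinh s)^(-(n-1)/(p-1)) ds`
converge uniformly on `[0,T]` to the identity as `p → +∞`. -/
theorem cone_profiles_tendstoUniformly (n : ℕ) (hn : 2 ≤ n) (T : ℝ) (hT : 0 < T) :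
    TendstoUniformlyOn
      (fun (p : ℝ) (t : ℝ) => ∫ s in (0 : ℝ)..t,
        Real.sinh s ^ (-(((n : ℝ) - 1) / (p - 1))))
      (fun t => t) atTop (Set.Icc (0 : ℝ) T) := by
  have hn' : (1 : ℝ) ≤ n := by exact_mod_cast one_le_two.trans hn
  have hexponent : Tendsto (fun p : ℝ => ((n : ℝ) - 1) / (p - 1)) atTop (𝓝[≥] 0) := by
    refine tendsto_nhdsWithin_iff.2 ⟨?_, ?_⟩
    · exact tendsto_const_nhds.div_atTop (tendsto_atTop_add_const_right _ (-1) tendsto_id)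
    · filter_upwards [eventually_ge_atTop 1] with p hp
      exact div_nonneg (sub_nonneg.2 hn') (sub_nonneg.2 hp)
  exact (tendstoUniformlyOn_integral_sinh_rpow_neg hT).comp_tendsto hexponent
end
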